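/- Let n ∈ ℕ, q > 0, t > 0 and set γ = 1/(nq). Then the best concentrated-real-pole rational approximation error equals a best polynomial approximation error on [−1, 1]: ρ_n^t(q) = inf_{p ∈ P_n} sup_{ŵ ∈ [−1, 1]} |p(ŵ) − E_t(ŵ)|, where E_t(ŵ) = exp(−t·(1 + ŵ)/(γ(1 − ŵ))) for ŵ ∈ [−1, 1) and E_t(1) = 0 (the value 0 at ŵ = 1 removes the singularity of the exponential expression). -/

import Mathlib

open Filter Set

/-- Best uniform approximation error of `exp(-t z)` on `[0, ∞)` by real rational
functions `p(z)/(z + n q)^n` with `p` of degree at most `n`. -/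
noncomputable def rho (n : ℕ) (t q : ℝ) : ℝ :=
  sInf {e : ℝ | ∃ p : Polynomial ℝ, p.degree ≤ n ∧
    e = sSup {y : ℝ | ∃ z : ℝ, 0 ≤ z ∧
      y = |p.eval z / (z + n * q) ^ n - Real.exp (-t * z)|}}

/-!
With `c = n q = 1/γ`, the Möbius map `w ↦ c(1+w)/(1-w)` sends `[-1, 1)` onto `[0, ∞)`, and
`z + c = 2c/(1-w)`. Clearing denominators, `p(z)/(z + c)ⁿ` is a polynomial of degree `≤ n` in `w`
whenever `deg p ≤ n`, and conversely `(z + c)ⁿ Q((z - c)/(z + c))` is one in `z`; so both infima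
range over the same functions. Their uniform errors agree on `[-1, 1)` by the substitution, and
adding the endpoint `w = 1` does not change the supremum because `exp(-t z) → 0 = E 1` as `z → ∞`,
which makes the error continuous on `[-1, 1]`.
-/

open Polynomial Topology

namespace Polynomial

variable {R : Type*} [CommSemiring R]

noncomputable def homogenizeComp (n : ℕ) (p A B : R[X]) : R[X] :=
  ∑ k ∈ Finset.range (n + 1), C (p.coeff k) * A ^ k * B ^ (n - k)

theorem natDegree_homogenizeComp_le {n : ℕ} (p : R[X]) {A B : R[X]} (hA : A.natDegree ≤ 1)
    (hB : B.natDegree ≤ 1) : (homogenizeComp n p A B).natDegree ≤ n := by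
  refine natDegree_sum_le_of_forall_le _ _ fun k hk => ?_
  have hkn : k ≤ n := Nat.lt_succ_iff.mp (Finset.mem_range.mp hk)
  calc (C (p.coeff k) * A ^ k * B ^ (n - k)).natDegree
      ≤ 0 + k * 1 + (n - k) * 1 := by
        refine natDegree_mul_le_of_le (natDegree_mul_le_of_le (natDegree_C _).le ?_) ?_
        · exact natDegree_pow_le_of_le k hA
        · exact natDegree_pow_le_of_le (n - k) hB
    _ = n := by omega

theorem eval_homogenizeComp {K : Type*} [Field K] {n : ℕ} {p : K[X]} (hp : p.natDegree ≤ n)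
    (A : K[X]) {B : K[X]} {x : K} (hB : B.eval x ≠ 0) :
    (homogenizeComp n p A B).eval x = B.eval x ^ n * p.eval (A.eval x / B.eval x) := by
  rw [eval_eq_sum_range' (Nat.lt_succ_of_le hp), Finset.mul_sum, homogenizeComp, eval_finsetSum]
  refine Finset.sum_congr rfl fun k hk => ?_
  obtain ⟨j, rfl⟩ := Nat.exists_eq_add_of_le (Nat.lt_succ_iff.mp (Finset.mem_range.mp hk))
  simp only [eval_mul, eval_C, eval_pow, Nat.add_sub_cancel_left]
  rw [div_pow, pow_add]
  field_simp

end Polynomial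

noncomputable def mobius (c w : ℝ) : ℝ := c * (1 + w) / (1 - w)

theorem mobius_add_self {c w : ℝ} (hw : w ≠ 1) : mobius c w + c = 2 * c / (1 - w) := by
  have : 1 - w ≠ 0 := sub_ne_zero.mpr hw.symm
  rw [mobius]; field_simp; ring

theorem mobius_add_self_pos {c w : ℝ} (hc : 0 < c) (hw : w < 1) : 0 < mobius c w + c := by
  rw [mobius_add_self hw.ne]
  exact div_pos (by positivity) (sub_pos.mpr hw)

theorem mobius_sub_self_div_add_self {c w : ℝ} (hc : c ≠ 0) (hw : w ≠ 1) :
    (mobius c w - c) / (mobius c w + c) = w := by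
  have : 1 - w ≠ 0 := sub_ne_zero.mpr hw.symm
  rw [div_eq_iff (by rw [mobius_add_self hw]; positivity), mobius]
  field_simp; ring

theorem image_mobius_Ico {c : ℝ} (hc : 0 < c) : mobius c '' Ico (-1) 1 = Ici 0 := by
  ext z
  constructor
  · rintro ⟨w, ⟨hw1, hw2⟩, rfl⟩
    exact div_nonneg (mul_nonneg hc.le (by linarith)) (by linarith)
  · intro (hz : 0 ≤ z)
    have hzc : 0 < z + c := by linarith
    refine ⟨(z - c) / (z + c), ⟨?_, ?_⟩, ?_⟩
    · rw [le_div_iff₀ hzc]; linarith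
    · rw [div_lt_one hzc]; linarith
    · rw [mobius]; field_simp [hc.ne']; ring

theorem tendsto_mobius_nhdsLT_one {c : ℝ} (hc : 0 < c) :
    Tendsto (mobius c) (𝓝[<] 1) atTop := by
  have hsub : Tendsto (fun w : ℝ => 1 - w) (𝓝[<] 1) (𝓝[>] 0) := by
    refine tendsto_nhdsWithin_iff.mpr ⟨?_, ?_⟩
    · simpa using (tendsto_const_nhds (x := (1 : ℝ))).sub
        (tendsto_id.mono_left (nhdsWithin_le_nhds (a := (1 : ℝ)) (s := Iio 1)))
    · filter_upwards [self_mem_nhdsWithin] with w (hw : w < 1)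
      exact sub_pos.mpr hw
  have hnum : Tendsto (fun w : ℝ => c * (1 + w)) (𝓝[<] 1) (𝓝 (c * (1 + 1))) :=
    ((continuous_const.mul (continuous_const.add continuous_id)).tendsto 1).mono_left
      nhdsWithin_le_nhds
  convert hnum.pos_mul_atTop (by positivity) (tendsto_inv_nhdsGT_zero.comp hsub) using 1
  funext w
  simp [mobius, div_eq_mul_inv]

theorem continuousOn_of_eqOn_exp_mobius {c t : ℝ} (hc : 0 < c) (ht : 0 < t) {E : ℝ → ℝ}
    (hE : EqOn E (fun w => Real.exp (-t * mobius c w)) (Ico (-1) 1)) (hE1 : E 1 = 0) :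
    ContinuousOn E (Icc (-1) 1) := by
  have hIco : ContinuousOn E (Ico (-1) 1) := by
    refine ContinuousOn.congr ?_ hE
    refine Real.continuous_exp.comp_continuousOn (continuousOn_const.mul ?_)
    exact (continuousOn_const.mul (continuousOn_const.add continuousOn_id)).div
      (continuousOn_const.sub continuousOn_id) fun w hw => by linarith [hw.2]
  intro w ⟨hw1, hw2⟩
  rcases hw2.lt_or_eq with hw2 | rfl
  · refine (hIco w ⟨hw1, hw2⟩).mono_of_mem_nhdsWithin ?_
    exact mem_nhdsWithin.mpr ⟨Iio 1, isOpen_Iio, hw2, fun x hx => ⟨hx.2.1, hx.1⟩⟩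
  · refine (continuousWithinAt_Iio_iff_Iic.mp ?_).mono Icc_subset_Iic_self
    have hexp : Tendsto (fun w => Real.exp (-t * mobius c w)) (𝓝[<] 1) (𝓝 0) :=
      Real.tendsto_exp_atBot.comp ((tendsto_mobius_nhdsLT_one hc).const_mul_atTop_of_neg
        (neg_neg_of_pos ht))
    rw [ContinuousWithinAt, hE1]
    refine hexp.congr' ?_
    filter_upwards [Ioo_mem_nhdsLT (show (-1 : ℝ) < 1 by norm_num)] with w hw
    exact (hE (Ioo_subset_Ico_self hw)).symm

theorem csSup_image_Icc_eq_csSup_image_Ico {α β : Type*} [ConditionallyCompleteLinearOrder α]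
    [TopologicalSpace α] [OrderTopology α] [DenselyOrdered α] [ConditionallyCompleteLinearOrder β]
    [TopologicalSpace β] [OrderTopology β] {f : α → β} {a b : α} (hab : a < b)
    (hf : ContinuousOn f (Icc a b)) : sSup (f '' Icc a b) = sSup (f '' Ico a b) := by
  have hsub : f '' Ico a b ⊆ f '' Icc a b := image_mono Ico_subset_Icc_self
  have hcl : f '' Icc a b ⊆ closure (f '' Ico a b) := by
    rw [← closure_Ico hab.ne] at hf ⊢
    exact hf.image_closure
  have hlub : IsLUB (f '' Icc a b) (sSup (f '' Icc a b)) :=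
    isLUB_csSup ((nonempty_Icc.mpr hab.le).image f) (isCompact_Icc.bddAbove_image hf)
  exact (((isLUB_iff_of_subset_of_subset_closure hsub hcl).mpr hlub).csSup_eq
    ((nonempty_Ico.mpr hab).image f)).symm

theorem sSup_abs_sub_exp_eq {n : ℕ} {c t : ℝ} (hc : 0 < c) (ht : 0 < t) {E : ℝ → ℝ}
    (hE : EqOn E (fun w => Real.exp (-t * mobius c w)) (Ico (-1) 1)) (hE1 : E 1 = 0)
    {P Q : ℝ[X]}
    (hPQ : ∀ w ∈ Ico (-1 : ℝ) 1, Q.eval w = P.eval (mobius c w) / (mobius c w + c) ^ n) :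
    sSup {y | ∃ z : ℝ, 0 ≤ z ∧ y = |P.eval z / (z + c) ^ n - Real.exp (-t * z)|}
      = sSup {y | ∃ w ∈ Icc (-1 : ℝ) 1, y = |Q.eval w - E w|} := by
  set g := fun w => |Q.eval w - E w|
  have hhalf : {y | ∃ z : ℝ, 0 ≤ z ∧ y = |P.eval z / (z + c) ^ n - Real.exp (-t * z)|}
      = g '' Ico (-1) 1 := by
    calc _ = (fun z => |P.eval z / (z + c) ^ n - Real.exp (-t * z)|) '' Ici 0 := by
          ext; simp [eq_comm]
      _ = g '' Ico (-1) 1 := by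
          rw [← image_mobius_Ico hc, image_image]
          exact image_congr fun w hw => by simp only [g, hPQ w hw, hE hw]
  have hinterval : {y | ∃ w ∈ Icc (-1 : ℝ) 1, y = g w} = g '' Icc (-1) 1 := by
    ext; simp [eq_comm]
  have hg : ContinuousOn g (Icc (-1) 1) :=
    (Q.continuous.continuousOn.sub (continuousOn_of_eqOn_exp_mobius hc ht hE hE1)).abs
  rw [hhalf, hinterval, csSup_image_Icc_eq_csSup_image_Ico (by norm_num) hg]

theorem exists_eval_eq_div_mobius_pow {n : ℕ} {c : ℝ} (hc : 0 < c) {P : ℝ[X]}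
    (hP : P.natDegree ≤ n) : ∃ Q : ℝ[X], Q.natDegree ≤ n ∧
      ∀ w ∈ Ico (-1 : ℝ) 1, Q.eval w = P.eval (mobius c w) / (mobius c w + c) ^ n := by
  refine ⟨homogenizeComp n P (C (1 / 2) * (1 + X)) (C (1 / (2 * c)) * (1 - X)),
    natDegree_homogenizeComp_le P (by compute_degree!) (by compute_degree!), fun w hw => ?_⟩
  have hw1 : 1 - w ≠ 0 := sub_ne_zero.mpr hw.2.ne'
  have hB : (C (1 / (2 * c)) * (1 - X)).eval w = (mobius c w + c)⁻¹ := by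
    rw [mobius_add_self hw.2.ne]
    simp only [eval_mul, eval_C, eval_sub, eval_one, eval_X]
    field_simp
  have hAB : (C (1 / 2) * (1 + X) : ℝ[X]).eval w / (C (1 / (2 * c)) * (1 - X)).eval w
      = mobius c w := by
    simp only [eval_mul, eval_C, eval_add, eval_sub, eval_one, eval_X, mobius]
    field_simp
  have hB0 : (C (1 / (2 * c)) * (1 - X)).eval w ≠ 0 := by
    rw [hB]; exact (inv_pos.mpr (mobius_add_self_pos hc hw.2)).ne'
  rw [eval_homogenizeComp hP _ hB0, hAB, hB, inv_pow, div_eq_mul_inv, mul_comm]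

theorem exists_eval_mobius_div_pow_eq {n : ℕ} {c : ℝ} (hc : 0 < c) {Q : ℝ[X]}
    (hQ : Q.natDegree ≤ n) : ∃ P : ℝ[X], P.natDegree ≤ n ∧
      ∀ w ∈ Ico (-1 : ℝ) 1, Q.eval w = P.eval (mobius c w) / (mobius c w + c) ^ n := by
  refine ⟨homogenizeComp n Q (X - C c) (X + C c),
    natDegree_homogenizeComp_le Q (by compute_degree!) (by compute_degree!), fun w hw => ?_⟩
  have hpos := mobius_add_self_pos hc hw.2
  rw [eval_homogenizeComp hQ _ (by simpa using hpos.ne')]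
  simp only [eval_sub, eval_add, eval_X, eval_C]
  rw [mobius_sub_self_div_add_self hc.ne' hw.2.ne]
  field_simp

theorem rho_eq_polynomial_error (n : ℕ) (hn : 0 < n) (q t : ℝ) (hq : 0 < q) (ht : 0 < t)
    (γ : ℝ) (hγ : γ = 1 / (n * q)) (E : ℝ → ℝ)
    (hE : ∀ w : ℝ, -1 ≤ w → w < 1 → E w = Real.exp (-t * (1 + w) / (γ * (1 - w))))
    (hE1 : E 1 = 0) :
    rho n t q = sInf {e : ℝ | ∃ p : Polynomial ℝ, p.degree ≤ n ∧
      e = sSup {y : ℝ | ∃ w ∈ Set.Icc (-1 : ℝ) 1, y = |p.eval w - E w|}} := by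
  have hc : 0 < (n : ℝ) * q := by positivity
  have hEc : EqOn E (fun w => Real.exp (-t * mobius (n * q) w)) (Ico (-1) 1) := by
    intro w ⟨hw1, hw2⟩
    simp only [hE w hw1 hw2, hγ, mobius]
    field_simp
  rw [rho]
  congr 1
  ext e
  constructor
  · rintro ⟨P, hP, rfl⟩
    obtain ⟨Q, hQ, hPQ⟩ := exists_eval_eq_div_mobius_pow hc (natDegree_le_iff_degree_le.mpr hP)
    exact ⟨Q, natDegree_le_iff_degree_le.mp hQ, sSup_abs_sub_exp_eq hc ht hEc hE1 hPQ⟩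
  · rintro ⟨Q, hQ, rfl⟩
    obtain ⟨P, hP, hPQ⟩ := exists_eval_mobius_div_pow_eq hc (natDegree_le_iff_degree_le.mpr hQ)
    exact ⟨P, natDegree_le_iff_degree_le.mp hP, (sSup_abs_sub_exp_eq hc ht hEc hE1 hPQ).symm⟩
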